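/- Let m and n be coprime positive integers, let d′ be a positive integer, and let g ∈ ℂ[[X,Y]] be a formal power series in two variables such that every monomial X^a·Y^b occurring in g with nonzero coefficient satisfies m·a + n·b > m·n·d′. Set f = (Y^m − X^n)^{d′} + g. Let C denote the set of pairs (x,y) of power series in ℂ[[t]] with zero constant term for which there exists a positive integer p with ord x = m·p, ord y = n·p, and leading coefficients satisfying y₀^m = x₀^n. Then for every positive integer N, the set of pairs (x,y) with zero constant term not belonging to C such that f(x,y) has the form t^N plus terms of order greater than N is equal to the set of pairs (x,y) with zero constant term not belonging to C such that (y^m − x^n)^{d′} has the form t^N plus terms of order greater than N. -/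

import Mathlib

/-!
Substituting `(x, y)` turns the quasi-homogeneous part `(Y^m - X^n)^{d'}` of `f` into
`h = (y^m - x^n)^{d'}`. Outside `C` no cancellation happens between the leading terms of `y^m`
and `x^n` (when their orders agree, coprimality of `m, n` puts `(x, y)` in `C` unless the leading
coefficients differ), so `ord (y^m - x^n) = s := min (m ord y) (n ord x)`. Every monomial of `g` has
weighted degree `m a + n b > m n d'`, hence `ord (x^a y^b) ≥ (m a + n b) s / (m n) > d' s = ord h`.
Thus `g(x, y)` only changes `f(x, y)` beyond its leading term, and `f(x, y) = t^N + …` iff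
`h = t^N + …`.
-/

open PowerSeries

/-- Evaluation `F(x,y)` of a two-variable formal power series `F ∈ ℂ[[X,Y]]` at a pair of
one-variable power series `x, y ∈ ℂ[[t]]`.  (The formula below computes the correct
substitution whenever `x` and `y` have zero constant term.) -/
noncomputable def mvEval (F : MvPowerSeries (Fin 2) ℂ) (x y : PowerSeries ℂ) :
    PowerSeries ℂ :=
  PowerSeries.mk fun k =>
    ∑ ab ∈ Finset.range (k + 1) ×ˢ Finset.range (k + 1),
      MvPowerSeries.coeff (Finsupp.single 0 ab.1 + Finsupp.single 1 ab.2) F *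
        PowerSeries.coeff k (x ^ ab.1 * y ^ ab.2)

theorem ENat.nsmul_lt_nsmul_add_nsmul_of_lt {m n d a b : ℕ} {u v s : ℕ∞} (hs0 : s ≠ 0)
    (hs : s ≠ ⊤) (hsu : s ≤ n • u) (hsv : s ≤ m • v) (hab : m * n * d < m * a + n * b) :
    d • s < a • u + b • v := by
  lift s to ℕ using hs
  simp only [nsmul_eq_mul] at *
  by_contra! h
  have hle : (((m * a + n * b) * s : ℕ) : ℕ∞) ≤ ((m * n * d * s : ℕ) : ℕ∞) := calc
    (((m * a + n * b) * s : ℕ) : ℕ∞) = (m * a) * s + (n * b) * s := by push_cast; ring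
    _ ≤ (m * a) * (n * u) + (n * b) * (m * v) := by gcongr
    _ = (m * n) * (a * u + b * v) := by ring
    _ ≤ (m * n) * (d * s) := by gcongr
    _ = ((m * n * d * s : ℕ) : ℕ∞) := by push_cast; ring
  have hs_pos : 0 < s := by exact_mod_cast pos_iff_ne_zero.mpr hs0
  exact (Nat.mul_lt_mul_of_pos_right hab hs_pos).not_ge (Nat.cast_le.mp hle)

namespace PowerSeries

/-- The condition `(x, y) ∈ C`. -/
def LeadingTermsCancel {R : Type*} [Semiring R] (m n : ℕ) (x y : R⟦X⟧) : Prop :=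
  ∃ p : ℕ, 0 < p ∧ x.order = (m * p : ℕ) ∧ y.order = (n * p : ℕ) ∧
    coeff (n * p) y ^ m = coeff (m * p) x ^ n

theorem coeff_mul_pow_of_X_pow_dvd {R : Type*} [CommSemiring R] {φ : R⟦X⟧} {k : ℕ}
    (h : X ^ k ∣ φ) (n : ℕ) : coeff (n * k) (φ ^ n) = coeff k φ ^ n := by
  obtain ⟨ψ, rfl⟩ := h
  simp [mul_pow, ← pow_mul, mul_comm k n, coeff_X_pow_mul']

theorem coeff_mul_pow_of_order_eq {R : Type*} [CommSemiring R] {φ : R⟦X⟧} {k : ℕ}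
    (h : φ.order = k) (n : ℕ) : coeff (n * k) (φ ^ n) = coeff k φ ^ n :=
  coeff_mul_pow_of_X_pow_dvd
    (X_pow_dvd_iff.mpr fun i hi => coeff_of_lt_order i (h ▸ by exact_mod_cast hi)) n

theorem coeff_pow_mul_pow_eq_zero_of_lt {R : Type*} [CommSemiring R] {x y : R⟦X⟧}
    (hx : constantCoeff x = 0) (hy : constantCoeff y = 0) {a b k : ℕ} (h : k < a + b) :
    coeff k (x ^ a * y ^ b) = 0 := by
  obtain ⟨x, rfl⟩ := X_dvd_iff.mpr hx
  obtain ⟨y, rfl⟩ := X_dvd_iff.mpr hy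
  rw [mul_pow, mul_pow, mul_mul_mul_comm, ← pow_add, coeff_X_pow_mul', if_neg (by omega)]

theorem coeff_add_eq_one_iff_of_order_lt {R : Type*} [Semiring R] [Nontrivial R]
    {φ ψ : R⟦X⟧} (h : φ.order < ψ.order) (N : ℕ) :
    ((∀ i < N, coeff i (φ + ψ) = 0) ∧ coeff N (φ + ψ) = 1) ↔
      ((∀ i < N, coeff i φ = 0) ∧ coeff N φ = 1) := by
  have hleading : ∀ χ : R⟦X⟧, ((∀ i < N, coeff i χ = 0) ∧ coeff N χ = 1) ↔
      (χ.order = N ∧ coeff N χ = 1) := fun χ => by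
    rw [order_eq_nat]
    exact ⟨fun ⟨hlow, hN⟩ => ⟨⟨hN ▸ one_ne_zero, hlow⟩, hN⟩, fun ⟨⟨_, hlow⟩, hN⟩ => ⟨hlow, hN⟩⟩
  rw [hleading, hleading, order_add_of_order_ne _ _ h.ne, min_eq_left h.le]
  exact and_congr_right fun hN => by rw [map_add, coeff_of_lt_order (φ := ψ) N (hN ▸ h), add_zero]

theorem order_pow_sub_pow {R : Type*} [CommRing R] [IsDomain R] {m n : ℕ} (hm : 0 < m)
    (hn : 0 < n) (hmn : m.Coprime n) {x y : R⟦X⟧} (hx : constantCoeff x = 0)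
    (hC : ¬LeadingTermsCancel m n x y) :
    (y ^ m - x ^ n).order = min (m • y.order) (n • x.order) := by
  have hneg : (-x ^ n).order = n • x.order := by rw [order_neg, order_pow]
  rw [sub_eq_add_neg]
  by_cases hne : m • y.order = n • x.order
  swap
  · rw [order_add_of_order_ne _ _ (by rwa [order_pow, hneg]), order_pow, hneg]
  rw [← hne, min_self]
  refine le_antisymm ?_
    (by simpa [order_pow, hneg, hne] using min_order_le_order_add (y ^ m) (-x ^ n))
  by_cases hvtop : y.order = ⊤
  · simp [hvtop, hm.ne']
  obtain ⟨V, hV⟩ := ENat.ne_top_iff_exists.mp hvtop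
  obtain ⟨U, hU⟩ : ∃ U : ℕ, (U : ℕ∞) = x.order := ENat.ne_top_iff_exists.mp fun hutop => by
    simp only [hutop, ← hV, nsmul_eq_mul, ENat.mul_top (Nat.cast_ne_zero.mpr hn.ne')] at hne
    exact ENat.natCast_ne_top (m * V) (by exact_mod_cast hne)
  have hUV : m * V = n * U := by
    rw [← hU, ← hV] at hne
    exact_mod_cast (by simpa using hne : (m : ℕ∞) * V = n * U)
  obtain ⟨p, rfl⟩ : m ∣ U := hmn.dvd_of_dvd_mul_left ⟨V, hUV.symm⟩
  obtain rfl : V = n * p := Nat.eq_of_mul_eq_mul_left hm (by rw [hUV]; ring)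
  have hp : 0 < p := by
    have h1 := (one_le_order_iff_constCoeff_eq_zero.mpr hx).trans_eq hU.symm
    exact Nat.pos_of_ne_zero fun hp0 => by simp [hp0] at h1
  rw [← hV, nsmul_eq_mul, ← Nat.cast_mul]
  refine order_le _ ?_
  rw [map_add, map_neg, ← sub_eq_add_neg, coeff_mul_pow_of_order_eq hV.symm, hUV,
    coeff_mul_pow_of_order_eq hU.symm, sub_ne_zero]
  exact fun h => hC ⟨p, hp, hU.symm, hV.symm, h⟩

end PowerSeries

noncomputable def prodEquivFinsuppFinTwo : ℕ × ℕ ≃ (Fin 2 →₀ ℕ) where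
  toFun ab := Finsupp.single 0 ab.1 + Finsupp.single 1 ab.2
  invFun d := (d 0, d 1)
  left_inv ab := by simp
  right_inv d := by ext i; fin_cases i <;> simp

theorem hasSubst_pair {x y : ℂ⟦X⟧} (hx : constantCoeff x = 0) (hy : constantCoeff y = 0) :
    MvPowerSeries.HasSubst ![x, y] :=
  MvPowerSeries.hasSubst_of_constantCoeff_zero fun i => by fin_cases i <;> assumption

theorem mvEval_eq_subst {F : MvPowerSeries (Fin 2) ℂ} {x y : ℂ⟦X⟧}
    (hx : constantCoeff x = 0) (hy : constantCoeff y = 0) :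
    mvEval F x y = MvPowerSeries.subst ![x, y] F := by
  ext k
  have hsubst : coeff k (MvPowerSeries.subst ![x, y] F) = ∑ᶠ ab : ℕ × ℕ,
      MvPowerSeries.coeff (Finsupp.single 0 ab.1 + Finsupp.single 1 ab.2) F *
        coeff k (x ^ ab.1 * y ^ ab.2) := by
    rw [PowerSeries.coeff, MvPowerSeries.coeff_subst (hasSubst_pair hx hy),
      ← finsum_comp_equiv prodEquivFinsuppFinTwo]
    simp [prodEquivFinsuppFinTwo, Finsupp.prod_add_index, pow_add, PowerSeries.coeff]
  rw [hsubst, mvEval, coeff_mk, finsum_eq_sum_of_support_subset]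
  intro ab hab
  contrapose! hab
  simp only [Finset.coe_product, Finset.coe_range, Set.mem_prod, Set.mem_Iio, not_and_or] at hab
  rw [Function.notMem_support, coeff_pow_mul_pow_eq_zero_of_lt hx hy (by omega), mul_zero]

theorem mvEval_zero_zero {F : MvPowerSeries (Fin 2) ℂ} (hF : MvPowerSeries.constantCoeff F = 0) :
    mvEval F 0 0 = 0 := by
  rw [mvEval_eq_subst (map_zero _) (map_zero _), show ![(0 : ℂ⟦X⟧), 0] = 0 by
    ext i; fin_cases i <;> rfl, MvPowerSeries.subst_zero_of_constantCoeff_zero hF]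

theorem lt_order_mvEval {F : MvPowerSeries (Fin 2) ℂ} {x y : ℂ⟦X⟧} {r : ℕ∞} (hr : r ≠ ⊤)
    (h : ∀ a b, MvPowerSeries.coeff (Finsupp.single 0 a + Finsupp.single 1 b) F ≠ 0 →
      r < (x ^ a * y ^ b).order) :
    r < (mvEval F x y).order := by
  refine (ENat.add_one_le_iff hr).mp (le_order _ _ fun k hk => ?_)
  rw [mvEval, coeff_mk]
  refine Finset.sum_eq_zero fun ab _ => ?_
  by_cases hF : MvPowerSeries.coeff (Finsupp.single 0 ab.1 + Finsupp.single 1 ab.2) F = 0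
  · rw [hF, zero_mul]
  · rw [coeff_of_lt_order k (((ENat.lt_add_one_iff hr).mp hk).trans_lt (h _ _ hF)), mul_zero]

theorem order_pow_sub_pow_lt_order_mvEval {m n d' : ℕ} (hm : 0 < m) (hn : 0 < n)
    (hmn : m.Coprime n) {g : MvPowerSeries (Fin 2) ℂ}
    (hg : ∀ d : Fin 2 →₀ ℕ, MvPowerSeries.coeff d g ≠ 0 → m * n * d' < m * d 0 + n * d 1)
    {x y : ℂ⟦X⟧} (hx : constantCoeff x = 0) (hy : constantCoeff y = 0)
    (hC : ¬LeadingTermsCancel m n x y)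
    (hxy : x ≠ 0 ∨ y ≠ 0) :
    ((y ^ m - x ^ n) ^ d').order < (mvEval g x y).order := by
  set s := min (m • y.order) (n • x.order)
  have hs0 : s ≠ 0 := by
    simp [s, hm.ne', hn.ne', order_ne_zero_iff_constCoeff_eq_zero.mpr hx,
      order_ne_zero_iff_constCoeff_eq_zero.mpr hy]
  have nsmul_ne_top : ∀ (k : ℕ) {e : ℕ∞}, e ≠ ⊤ → k • e ≠ ⊤ := fun k e he => by
    rw [nsmul_eq_mul]; exact WithTop.mul_ne_top (ENat.natCast_ne_top k) he
  have hs : s ≠ ⊤ := by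
    rcases hxy with hx0 | hy0
    · exact ne_top_of_le_ne_top (nsmul_ne_top n (order_eq_top.not.mpr hx0)) (min_le_right _ _)
    · exact ne_top_of_le_ne_top (nsmul_ne_top m (order_eq_top.not.mpr hy0)) (min_le_left _ _)
  rw [order_pow, order_pow_sub_pow hm hn hmn hx hC]
  refine lt_order_mvEval (nsmul_ne_top d' hs) fun a b hab => ?_
  rw [order_mul, order_pow, order_pow]
  exact ENat.nsmul_lt_nsmul_add_nsmul_of_lt hs0 hs (min_le_right _ _) (min_le_left _ _)
    (by simpa [Finsupp.single_apply] using hg _ hab)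

theorem stmt7_general (m n d' : ℕ) (hm : 0 < m) (hn : 0 < n) (hmn : Nat.Coprime m n)
    (g : MvPowerSeries (Fin 2) ℂ)
    (hg : ∀ d : Fin 2 →₀ ℕ, MvPowerSeries.coeff d g ≠ 0 →
        m * n * d' < m * d 0 + n * d 1)
    (f : MvPowerSeries (Fin 2) ℂ)
    (hf : f = (MvPowerSeries.X 1 ^ m - MvPowerSeries.X 0 ^ n) ^ d' + g)
    (N : ℕ) :
    {xy : PowerSeries ℂ × PowerSeries ℂ |
        PowerSeries.constantCoeff xy.1 = 0 ∧ PowerSeries.constantCoeff xy.2 = 0 ∧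
        ¬(∃ p : ℕ, 0 < p ∧ xy.1.order = (m * p : ℕ) ∧ xy.2.order = (n * p : ℕ) ∧
            (PowerSeries.coeff (n * p) xy.2) ^ m =
              (PowerSeries.coeff (m * p) xy.1) ^ n) ∧
        (∀ i < N, PowerSeries.coeff i (mvEval f xy.1 xy.2) = 0) ∧
        PowerSeries.coeff N (mvEval f xy.1 xy.2) = 1} =
    {xy : PowerSeries ℂ × PowerSeries ℂ |
        PowerSeries.constantCoeff xy.1 = 0 ∧ PowerSeries.constantCoeff xy.2 = 0 ∧
        ¬(∃ p : ℕ, 0 < p ∧ xy.1.order = (m * p : ℕ) ∧ xy.2.order = (n * p : ℕ) ∧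
            (PowerSeries.coeff (n * p) xy.2) ^ m =
              (PowerSeries.coeff (m * p) xy.1) ^ n) ∧
        (∀ i < N, PowerSeries.coeff i ((xy.2 ^ m - xy.1 ^ n) ^ d') = 0) ∧
        PowerSeries.coeff N ((xy.2 ^ m - xy.1 ^ n) ^ d') = 1} := by
  ext ⟨x, y⟩
  simp only [Set.mem_ofPred_eq]
  refine and_congr_right fun hx => and_congr_right fun hy => and_congr_right fun hC => ?_
  have hfxy : mvEval f x y = (y ^ m - x ^ n) ^ d' + mvEval g x y := by
    have hxy := hasSubst_pair hx hy
    simp [hf, mvEval_eq_subst hx hy, MvPowerSeries.subst_add hxy, MvPowerSeries.subst_pow hxy,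
      MvPowerSeries.subst_sub hxy, MvPowerSeries.subst_X hxy]
  rw [hfxy]
  by_cases hxy : x = 0 ∧ y = 0
  · obtain ⟨rfl, rfl⟩ := hxy
    have hg0 : MvPowerSeries.constantCoeff g = 0 := by
      by_contra h
      simpa using hg 0 h
    rw [mvEval_zero_zero hg0, add_zero]
  · exact coeff_add_eq_one_iff_of_order_lt
      (order_pow_sub_pow_lt_order_mvEval hm hn hmn hg hx hy hC (not_and_or.mp hxy)) N

/-- With `f = (Y^m − X^n)^{d′} + g` as in equation (1) of the paper, and `C` the set of
pairs `(x,y)` of power series with zero constant term admitting a positive integer `p`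
with `ord x = m·p`, `ord y = n·p` and leading coefficients satisfying `y₀^m = x₀^n`:
for every positive integer `N`, the pairs `(x,y) ∉ C` (with zero constant terms) for which
`f(x,y) = t^N + (higher order)` are exactly the pairs `(x,y) ∉ C` for which
`(y^m − x^n)^{d′} = t^N + (higher order)`. -/
theorem stmt7 (m n d' : ℕ) (hm : 0 < m) (hn : 0 < n) (hmn : Nat.Coprime m n)
    (hd' : 0 < d')
    (g : MvPowerSeries (Fin 2) ℂ)
    (hg : ∀ d : Fin 2 →₀ ℕ, MvPowerSeries.coeff d g ≠ 0 →
        m * n * d' < m * d 0 + n * d 1)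
    (f : MvPowerSeries (Fin 2) ℂ)
    (hf : f = (MvPowerSeries.X 1 ^ m - MvPowerSeries.X 0 ^ n) ^ d' + g)
    (N : ℕ) (hN : 0 < N) :
    {xy : PowerSeries ℂ × PowerSeries ℂ |
        PowerSeries.constantCoeff xy.1 = 0 ∧ PowerSeries.constantCoeff xy.2 = 0 ∧
        ¬(∃ p : ℕ, 0 < p ∧ xy.1.order = (m * p : ℕ) ∧ xy.2.order = (n * p : ℕ) ∧
            (PowerSeries.coeff (n * p) xy.2) ^ m =
              (PowerSeries.coeff (m * p) xy.1) ^ n) ∧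
        (∀ i < N, PowerSeries.coeff i (mvEval f xy.1 xy.2) = 0) ∧
        PowerSeries.coeff N (mvEval f xy.1 xy.2) = 1} =
    {xy : PowerSeries ℂ × PowerSeries ℂ |
        PowerSeries.constantCoeff xy.1 = 0 ∧ PowerSeries.constantCoeff xy.2 = 0 ∧
        ¬(∃ p : ℕ, 0 < p ∧ xy.1.order = (m * p : ℕ) ∧ xy.2.order = (n * p : ℕ) ∧
            (PowerSeries.coeff (n * p) xy.2) ^ m =
              (PowerSeries.coeff (m * p) xy.1) ^ n) ∧
        (∀ i < N, PowerSeries.coeff i ((xy.2 ^ m - xy.1 ^ n) ^ d') = 0) ∧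
        PowerSeries.coeff N ((xy.2 ^ m - xy.1 ^ n) ^ d') = 1} :=
  stmt7_general m n d' hm hn hmn g hg f hf N
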